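/- Let R be a commutative ring and P an R-module. Then P is projective if and only if P is u-(R∖𝔪)-projective for every maximal ideal 𝔪 of R. -/

import Mathlib

open CategoryTheory

universe u

def IsUSTorsionMod {R : Type u} [CommRing R] (S : Submonoid R) (X : ModuleCat.{u} R) : Prop :=
  ∃ s ∈ S, ∀ x : X, s • x = 0

def IsUSTorsion {R : Type u} [CommRing R] (S : Submonoid R) (T : Type u)
    [AddCommGroup T] [Module R T] : Prop :=
  ∃ s ∈ S, ∀ x : T, s • x = 0

noncomputable def ext (R : Type u) [CommRing R] (n : ℕ) (P M : ModuleCat.{u} R) :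
    ModuleCat.{u} R :=
  ((Ext R (ModuleCat.{u} R) n).obj (Opposite.op P)).obj M

def IsUSProjective {R : Type u} [CommRing R] (S : Submonoid R) (P : Type u)
    [AddCommGroup P] [Module R P] : Prop :=
  ∀ M : ModuleCat.{u} R, IsUSTorsionMod S (ext R 1 (ModuleCat.of R P) M)

def IsUSInjective {R : Type u} [CommRing R] (S : Submonoid R) (E : Type u)
    [AddCommGroup E] [Module R E] : Prop :=
  ∀ M : ModuleCat.{u} R, IsUSTorsionMod S (ext R 1 M (ModuleCat.of R E))

/-!
If a module is killed by an element outside each maximal ideal, its annihilator lies in no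
maximal ideal, so the module is zero. Hence `P` is u-`(R∖𝔪)`-projective for every `𝔪` exactly
when `Ext¹(P, -)` vanishes, and this characterises projectivity: for a projective resolution
`P₁ → P₀ → P` with `K = ker (P₀ → P)`, the map `P₁ → K` is a 1-cocycle of `Hom(P_•, K)`, and
writing it as a coboundary `d₁₀ ≫ ψ` yields a section of `P₀ → P`.
-/

namespace CategoryTheory.ProjectiveResolution

open Limits

variable {R : Type*} [Ring R] {C : Type*} [Category C] [Abelian C] [Linear R C]
  [EnoughProjectives C] {X : C} (P : ProjectiveResolution X)

lemma exists_d_comp_eq_of_subsingleton_ext_one {Y : C}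
    (hY : Subsingleton (((Ext R C 1).obj (Opposite.op X)).obj Y))
    (φ : P.complex.X 1 ⟶ Y) (hφ : P.complex.d 2 1 ≫ φ = 0) :
    ∃ ψ : P.complex.X 0 ⟶ Y, P.complex.d 1 0 ≫ ψ = φ := by
  have hZ : IsZero ((P.complex.linearYonedaObj R Y).homology 1) :=
    (P.isoExt 1 Y).isZero_iff.1 (ModuleCat.isZero_of_subsingleton _)
  rw [← HomologicalComplex.exactAt_iff_isZero_homology,
    HomologicalComplex.exactAt_iff' _ 0 1 2 (by simp) (by simp),
    ShortComplex.moduleCat_exact_iff] at hZ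
  exact hZ φ hφ

lemma isSplitEpi_π_f_zero_of_subsingleton_ext_one
    (h : Subsingleton (((Ext R C 1).obj (Opposite.op X)).obj (kernel (P.π.f 0)))) :
    IsSplitEpi (P.π.f 0 : P.complex.X 0 ⟶ X) := by
  let e : P.complex.X 0 ⟶ X := P.π.f 0
  have hd : P.complex.d 1 0 ≫ e = 0 := P.complex_d_comp_π_f_zero
  let φ := kernel.lift e _ hd
  have hφ : P.complex.d 2 1 ≫ φ = 0 := by
    rw [← cancel_mono (kernel.ι e), Category.assoc, kernel.lift_ι, zero_comp]
    exact P.complex.d_comp_d 2 1 0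
  obtain ⟨ψ, hψ⟩ : ∃ ψ : P.complex.X 0 ⟶ kernel e, P.complex.d 1 0 ≫ ψ = φ :=
    P.exists_d_comp_eq_of_subsingleton_ext_one h φ hφ
  -- `𝟙 - ψ ≫ ι` kills the image of `d₁₀`, so it factors through the cokernel `e` of `d₁₀`.
  have hcond : P.complex.d 1 0 ≫ (𝟙 _ - ψ ≫ kernel.ι e) = 0 := by
    rw [Preadditive.comp_sub, Category.comp_id, reassoc_of% hψ, kernel.lift_ι, sub_self]
  let t : X ⟶ P.complex.X 0 :=
    Cofork.IsColimit.desc P.isColimitCokernelCofork _ (hcond.trans zero_comp.symm)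
  have ht : e ≫ t = 𝟙 _ - ψ ≫ kernel.ι e := Cofork.IsColimit.π_desc P.isColimitCokernelCofork
  have : Epi e := inferInstanceAs (Epi (P.π.f 0))
  refine ⟨⟨t, ?_⟩⟩
  change t ≫ e = 𝟙 X
  rw [← cancel_epi e, reassoc_of% ht]
  simp

end CategoryTheory.ProjectiveResolution

namespace CategoryTheory

lemma projective_iff_forall_subsingleton_ext_one (R : Type*) [Ring R] {C : Type*} [Category C]
    [Abelian C] [Linear R C] [EnoughProjectives C] (X : C) :
    Projective X ↔ ∀ Y : C, Subsingleton (((Ext R C 1).obj (Opposite.op X)).obj Y) := by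
  refine ⟨fun _ Y ↦ ModuleCat.subsingleton_of_isZero (isZero_Ext_succ_of_projective X Y 0),
    fun h ↦ ?_⟩
  let P : ProjectiveResolution X := (HasProjectiveResolution.out (Z := X)).some
  have := P.isSplitEpi_π_f_zero_of_subsingleton_ext_one (h _)
  exact (Retract.mk _ _ (IsSplitEpi.id (P.π.f 0 : P.complex.X 0 ⟶ X))).projective

end CategoryTheory

lemma Module.subsingleton_of_forall_isMaximal_exists_smul_eq_zero {R M : Type*} [CommRing R]
    [AddCommGroup M] [Module R M]
    (h : ∀ 𝔪 : Ideal R, 𝔪.IsMaximal → ∃ s : R, s ∉ 𝔪 ∧ ∀ x : M, s • x = 0) :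
    Subsingleton M := by
  rw [← Module.annihilator_eq_top_iff (R := R)]
  by_contra hne
  obtain ⟨𝔪, h𝔪, hle⟩ := Ideal.exists_le_maximal _ hne
  obtain ⟨s, hs, hsM⟩ := h 𝔪 h𝔪
  exact hs (hle (Module.mem_annihilator.2 hsM))

lemma forall_isUSTorsionMod_primeCompl_iff_subsingleton {R : Type u} [CommRing R]
    (X : ModuleCat.{u} R) :
    (∀ (𝔪 : Ideal R) (h𝔪 : 𝔪.IsMaximal), IsUSTorsionMod (@Ideal.primeCompl R _ 𝔪 h𝔪.isPrime) X) ↔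
      Subsingleton X :=
  ⟨fun h ↦ Module.subsingleton_of_forall_isMaximal_exists_smul_eq_zero fun 𝔪 h𝔪 ↦ h 𝔪 h𝔪,
    fun _ _ _ ↦ ⟨1, Submonoid.one_mem _, fun _ ↦ Subsingleton.elim _ _⟩⟩

theorem projective_iff_u_m_projective
    {R : Type u} [CommRing R] (P : Type u) [AddCommGroup P] [Module R P] :
    Module.Projective R P ↔
      ∀ (𝔪 : Ideal R) (h𝔪 : 𝔪.IsMaximal),
        IsUSProjective (@Ideal.primeCompl R _ 𝔪 h𝔪.isPrime) P := by
  rw [IsProjective.iff_projective, projective_iff_forall_subsingleton_ext_one R]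
  simp only [IsUSProjective, ← forall_isUSTorsionMod_primeCompl_iff_subsingleton]
  exact ⟨fun h 𝔪 h𝔪 M ↦ h M 𝔪 h𝔪, fun h M 𝔪 h𝔪 ↦ h 𝔪 h𝔪 M⟩
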